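/- Let I^{(d)} = ⋂_ε ℘_ε^d be the ideal of the scheme of fat points of multiplicity d supported on the 2^n points [1:±1:…:±1] of ℙ^n. Then I^{(d)} = (x₀² − x_n², x₁² − x_n², …, x_{n−1}² − x_n²)^d; in particular, I^{(d)} is generated by the C(n+d−1, n−1) degree-2d forms ∏_{i=0}^{n−1} (x_i² − x_n²)^{a_i} with a ∈ ℕ^n, a₀+…+a_{n−1} = d. -/

import Mathlib

open MvPolynomial

/-- The vanishing ideal `℘_ε` of the point `[1:ε₁:…:εₙ] ∈ ℙⁿ`, generated by
the linear forms `x_i − ε_i·x₀`, `i = 1,…,n`. -/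
noncomputable def pIdeal (n : ℕ) (ε : Fin n → ℂ) :
    Ideal (MvPolynomial (Fin (n+1)) ℂ) :=
  Ideal.span { p | ∃ i : Fin n, p = X i.succ - C (ε i) * X (0 : Fin (n+1)) }

/-- The fat-point ideal `I^{(d)} = ⋂_{ε ∈ {±1}^n} ℘_ε^d`. -/
noncomputable def fatIdeal (n d : ℕ) : Ideal (MvPolynomial (Fin (n+1)) ℂ) :=
  ⨅ ε : {ε : Fin n → ℂ // ∀ i, ε i = 1 ∨ ε i = -1}, (pIdeal n ε.1) ^ d

/-!
Let `J = (x_0² − x_n², …, x_{n−1}² − x_n²)`. Each generator vanishes at all the points, so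
`J^d ⊆ I^{(d)}`. Conversely, the sign changes `x_i ↦ ±x_i` permute the points, so averaging
against characters (`2` is invertible) shows that every parity component `f_T` of `f ∈ I^{(d)}`
(the sum of its terms whose exponent vector is `≡ T mod 2`) vanishes to order `d` at
`P = [1:⋯:1]`. Such a component is `x^T · g(x_0², …, x_n²)`; as `x^T` does not vanish at `P` and
squaring the coordinates is étale at `P`, `g` vanishes to order `d` at `P`, i.e.
`g ∈ (y_0 − y_n, …, y_{n−1} − y_n)^d`, whence `f_T ∈ J^d`. Orders of vanishing at `P` are
measured as `t`-adic orders of restrictions to lines through `P`.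
-/

namespace Polynomial

variable {R S : Type*} [CommRing R] [CommRing S]

theorem X_pow_dvd_of_X_pow_dvd_mul [NoZeroDivisors R] {a : R[X]} (ha : a.coeff 0 ≠ 0) :
    ∀ {d : ℕ} {b : R[X]}, X ^ d ∣ a * b → X ^ d ∣ b
  | 0, _, _ => by simp
  | d + 1, b, h => by
    have hb : b.coeff 0 = 0 := by
      have := X_dvd_iff.mp ((dvd_pow_self X d.succ_ne_zero).trans h)
      simpa [mul_coeff_zero, ha] using this
    obtain ⟨b, rfl⟩ := X_dvd_iff.mpr hb
    rw [pow_succ', mul_left_comm, isRegular_X.left.dvd_cancel_left] at h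
    rw [pow_succ']
    exact mul_dvd_mul_left X (X_pow_dvd_of_X_pow_dvd_mul ha h)

theorem X_pow_dvd_of_X_pow_dvd_eval₂ (β : R →+* S[X])
    (hβ : Function.Injective fun r => (β r).coeff 0) :
    ∀ {d : ℕ} {q : R[X]}, X ^ d ∣ q.eval₂ β X → X ^ d ∣ q
  | 0, _, _ => by simp
  | d + 1, q, h => by
    have hq : q.coeff 0 = 0 := by
      have hX : (q.eval₂ β X).coeff 0 = (β (q.coeff 0)).coeff 0 := by
        conv_lhs => rw [← X_mul_divX_add q]
        simp only [eval₂_add, eval₂_X_mul, eval₂_C, coeff_add, coeff_mul_X_zero, zero_add]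
      refine hβ ?_
      simpa [← hX] using X_dvd_iff.mp ((dvd_pow_self X d.succ_ne_zero).trans h)
    obtain ⟨q, rfl⟩ := X_dvd_iff.mpr hq
    rw [eval₂_X_mul, mul_comm, pow_succ', isRegular_X.left.dvd_cancel_left] at h
    rw [pow_succ']
    exact mul_dvd_mul_left X (X_pow_dvd_of_X_pow_dvd_eval₂ β hβ h)

end Polynomial

lemma one_add_neg_one_pow {R : Type*} [Ring R] (k : ℕ) :
    1 + (-1 : R) ^ k = if Even k then 2 else 0 := by
  rcases Nat.even_or_odd k with h | h
  · simp [h.neg_one_pow, h, one_add_one_eq_two]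
  · simp [h.neg_one_pow, Nat.not_even_iff_odd.mpr h]

lemma ZMod.even_val_add_iff (t : ZMod 2) (k : ℕ) : Even (t.val + k) ↔ (k : ZMod 2) = t := by
  rw [← ZMod.natCast_eq_zero_iff_even, Nat.cast_add, ZMod.natCast_zmod_val, add_eq_zero_iff_eq_neg,
    ZMod.neg_eq_self_mod_two, eq_comm]

theorem Ideal.span_range_pow {ι R : Type*} [Fintype ι] [DecidableEq ι] [CommSemiring R]
    (g : ι → R) (d : ℕ) :
    Ideal.span (Set.range g) ^ d =
      Ideal.span {p | ∃ a : ι → ℕ, ∑ i, a i = d ∧ p = ∏ i, g i ^ a i} := by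
  have prod_add_single (a : ι → ℕ) (i : ι) :
      ∏ j, g j ^ (a + Pi.single i 1 : ι → ℕ) j = (∏ j, g j ^ a j) * g i := by
    simp only [Pi.add_apply, pow_add, Finset.prod_mul_distrib]
    congr 1
    simp [Pi.single_apply]
  induction d with
  | zero =>
    rw [pow_zero, Ideal.one_eq_top, eq_comm, Ideal.eq_top_iff_one]
    exact Ideal.subset_span ⟨0, by simp⟩
  | succ d ih =>
    rw [pow_succ, ih, Ideal.span_mul_span']
    congr 1
    ext p
    constructor
    · rintro ⟨_, ⟨a, ha, rfl⟩, _, ⟨i, rfl⟩, rfl⟩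
      exact ⟨a + Pi.single i 1, by simp [Finset.sum_add_distrib, ha], (prod_add_single a i).symm⟩
    · rintro ⟨a, ha, rfl⟩
      obtain ⟨i, hi⟩ : ∃ i, a i ≠ 0 := by
        by_contra! h
        simp [h] at ha
      obtain ⟨b, rfl⟩ : ∃ b : ι → ℕ, a = b + Pi.single i 1 :=
        ⟨a - Pi.single i 1, funext fun j => by
          by_cases hj : j = i
          · subst hj
            simp only [Pi.add_apply, Pi.sub_apply, Pi.single_eq_same]
            omega
          · simp [hj]⟩
      refine ⟨_, ⟨b, ?_, rfl⟩, g i, ⟨i, rfl⟩, (prod_add_single b i).symm⟩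
      simpa [Finset.sum_add_distrib] using ha

lemma Ideal.span_range_fin_succ_of_last_eq_zero {R : Type*} [CommSemiring R] {n : ℕ}
    (g : Fin (n + 1) → R) (hg : g (Fin.last n) = 0) :
    Ideal.span (Set.range g) = Ideal.span (Set.range fun i : Fin n => g i.castSucc) := by
  have := Fin.range_snoc (Fin.init g) (g (Fin.last n))
  rw [Fin.snoc_init_self, hg] at this
  rw [this, Ideal.span_insert_zero]
  rfl

namespace MvPolynomial

section RestrictLine

variable {σ R : Type*} [CommRing R] (c : σ)

/-- The ideal of the point all of whose coordinates are equal. -/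
noncomputable def diagonalIdeal : Ideal (MvPolynomial σ R) :=
  Ideal.span (Set.range fun i => X i - X c)

lemma X_sub_X_mem_diagonalIdeal (i j : σ) :
    (X i - X j : MvPolynomial σ R) ∈ diagonalIdeal c := by
  have hi : X i - X c ∈ diagonalIdeal (R := R) c := Ideal.subset_span ⟨i, rfl⟩
  have hj : X j - X c ∈ diagonalIdeal (R := R) c := Ideal.subset_span ⟨j, rfl⟩
  simpa using sub_mem hi hj

/-- Restriction to the line `t ↦ (x_c, …, x_c) + t a (x - (x_c, …, x_c))`, with the
coordinates `x_i` as generic coefficients. -/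
noncomputable def restrictLine (a : R) : MvPolynomial σ R →ₐ[R] Polynomial (MvPolynomial σ R) :=
  aeval fun i => Polynomial.C (X c) + Polynomial.X * Polynomial.C (C a * (X i - X c))

lemma restrictLine_X_sub_X (a : R) (i j : σ) :
    restrictLine c a (X i - X j) = Polynomial.X * Polynomial.C (C a * (X i - X j)) := by
  simp only [restrictLine, map_sub, aeval_X, map_mul]
  ring

lemma X_pow_dvd_restrictLine (a : R) {d : ℕ} {g : MvPolynomial σ R}
    (hg : g ∈ diagonalIdeal c ^ d) : Polynomial.X ^ d ∣ restrictLine c a g := by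
  have hle : (diagonalIdeal c).map (restrictLine c a) ≤ Ideal.span {Polynomial.X} := by
    rw [diagonalIdeal, Ideal.map_span, Ideal.span_le]
    rintro _ ⟨_, ⟨i, rfl⟩, rfl⟩
    exact Ideal.mem_span_singleton.mpr ⟨_, restrictLine_X_sub_X c a i c⟩
  have := Ideal.le_comap_pow _ d (Ideal.pow_right_mono (Ideal.map_le_iff_le_comap.mp hle) d hg)
  rwa [Ideal.mem_comap, Ideal.span_singleton_pow, Ideal.mem_span_singleton] at this

lemma coeff_restrictLine_mem_pow (a : R) (g : MvPolynomial σ R) (k : ℕ) :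
    (restrictLine c a g).coeff k ∈ diagonalIdeal c ^ k := by
  induction g using MvPolynomial.induction_on generalizing k with
  | C r => cases k <;> simp [restrictLine, Polynomial.coeff_C]
  | add p q hp hq => simpa using add_mem (hp k) (hq k)
  | mul_X p i hp =>
    rw [map_mul, restrictLine, aeval_X, ← restrictLine, mul_add, Polynomial.coeff_add,
      Polynomial.coeff_mul_C, mul_left_comm]
    refine add_mem (Ideal.mul_mem_right _ _ (hp k)) ?_
    cases k with
    | zero => simp
    | succ k =>
      rw [Polynomial.coeff_X_mul, Polynomial.coeff_mul_C, pow_succ]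
      exact Ideal.mul_mem_mul (hp k) (Ideal.mul_mem_left _ _ (X_sub_X_mem_diagonalIdeal c i c))

lemma eval_one_restrictLine_one (g : MvPolynomial σ R) : (restrictLine c 1 g).eval 1 = g := by
  suffices h : (Polynomial.evalRingHom 1).comp (restrictLine (R := R) c 1).toRingHom =
      RingHom.id _ from RingHom.congr_fun h g
  ext <;> simp [restrictLine]

theorem mem_diagonalIdeal_pow_iff {d : ℕ} {g : MvPolynomial σ R} :
    g ∈ diagonalIdeal c ^ d ↔ Polynomial.X ^ d ∣ restrictLine c 1 g := by
  refine ⟨X_pow_dvd_restrictLine c 1, fun h => ?_⟩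
  rw [← eval_one_restrictLine_one c g, Polynomial.eval_eq_sum_range]
  refine sum_mem fun k _ => ?_
  rw [one_pow, mul_one]
  rcases lt_or_ge k d with hk | hk
  · rw [Polynomial.X_pow_dvd_iff.mp h k hk]
    exact zero_mem _
  · exact Ideal.pow_le_pow_right hk (coeff_restrictLine_mem_pow c 1 g k)

lemma coeff_zero_restrictLine_monomial (a : R) (α : σ →₀ ℕ) :
    (restrictLine c a (monomial α 1)).coeff 0 = X c ^ α.degree := by
  rw [Polynomial.coeff_zero_eq_eval_zero, restrictLine, aeval_monomial]
  simp [Finsupp.prod, Polynomial.eval_prod, Finsupp.degree_apply, Finset.prod_pow_eq_pow_sum]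

end RestrictLine

section Squares

variable {σ R : Type*} [CommRing R] (c : σ)

/-- `p ↦ p(x_c x_0, x_c x_1, …)`, realised on exponents as `α ↦ α + |α| e_c`. -/
noncomputable def scaleByVar : MvPolynomial σ R →ₐ[R] MvPolynomial σ R :=
  AddMonoidAlgebra.mapDomainAlgHom R R
    (AddMonoidHom.id _ + (Finsupp.singleAddHom c).comp Finsupp.degree)

lemma scaleByVar_X (i : σ) : scaleByVar c (X i : MvPolynomial σ R) = X c * X i := by
  rw [X, X, monomial_mul, one_mul, scaleByVar, AddMonoidAlgebra.mapDomainAlgHom_apply]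
  erw [AddMonoidAlgebra.mapDomain_single]
  simp only [AddMonoidHom.add_apply, AddMonoidHom.id_apply, AddMonoidHom.coe_comp,
    Function.comp_apply, Finsupp.degree_single, Finsupp.singleAddHom_apply, add_comm]
  rfl

lemma scaleByVar_injective : Function.Injective (scaleByVar (R := R) c) := by
  refine AddMonoidAlgebra.mapDomain_injective fun α β h => ?_
  simp only [AddMonoidHom.add_apply, AddMonoidHom.id_apply, AddMonoidHom.coe_comp,
    Function.comp_apply, Finsupp.singleAddHom_apply] at h
  have hdeg : α.degree = β.degree := by
    have := congrArg Finsupp.degree h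
    simp only [map_add, Finsupp.degree_single] at this
    omega
  rwa [hdeg, add_left_inj] at h

lemma map_expand_diagonalIdeal (p : ℕ) :
    (diagonalIdeal c).map (expand p) =
      Ideal.span (Set.range fun i => (X i ^ p - X c ^ p : MvPolynomial σ R)) := by
  rw [diagonalIdeal, Ideal.map_span, ← Set.range_comp]
  simp [Function.comp_def]

variable {K : Type*} [Field K]

/-- Since `(x_c + t (x_i - x_c)/2)² = x_c² + t (x_c x_i - x_c² + t ((x_i - x_c)/2)²)`,
substituting these coefficients for the variables turns the restriction of `g` to the line with
slope `1` into the restriction of `g(x_0², x_1², …)` to the line with slope `1/2`. -/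
noncomputable def squareLineCoeffs : MvPolynomial σ K →ₐ[K] Polynomial (MvPolynomial σ K) :=
  aeval fun i =>
    Polynomial.C (X c * X i) + Polynomial.X * Polynomial.C ((C 2⁻¹ * (X i - X c)) ^ 2)

lemma coeff_zero_squareLineCoeffs (g : MvPolynomial σ K) :
    (squareLineCoeffs c g).coeff 0 = scaleByVar c g := by
  suffices h : (Polynomial.constantCoeff).comp (squareLineCoeffs (K := K) c).toRingHom =
      (scaleByVar c).toRingHom from RingHom.congr_fun h g
  ext <;> simp [squareLineCoeffs, scaleByVar_X]

lemma restrictLine_expand [NeZero (2 : K)] (g : MvPolynomial σ K) :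
    restrictLine c 2⁻¹ (expand 2 g) =
      (restrictLine c 1 g).eval₂ (squareLineCoeffs c).toRingHom Polynomial.X := by
  suffices h : (restrictLine (R := K) c 2⁻¹).toRingHom.comp (expand 2).toRingHom =
      (Polynomial.eval₂RingHom (squareLineCoeffs c).toRingHom Polynomial.X).comp
        (restrictLine c 1).toRingHom from RingHom.congr_fun h g
  refine MvPolynomial.ringHom_ext (fun a => ?_) (fun i => ?_)
  · simp [restrictLine, squareLineCoeffs]
  · have h2 : (Polynomial.C (C (2⁻¹ : K)) : Polynomial (MvPolynomial σ K)) * 2 = 1 := by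
      rw [← map_ofNat (Polynomial.C.comp C) 2, RingHom.comp_apply, ← map_mul, ← map_mul,
        inv_mul_cancel₀ two_ne_zero, map_one, map_one]
    simp only [restrictLine, squareLineCoeffs, AlgHom.toRingHom_eq_coe, RingHom.coe_comp,
      RingHom.coe_coe, Function.comp_apply, expand_X, map_pow, map_mul, map_sub, aeval_X, C_1,
      one_mul, Polynomial.coe_eval₂RingHom, Polynomial.eval₂_add, Polynomial.eval₂_mul,
      Polynomial.eval₂_sub, Polynomial.eval₂_C, Polynomial.eval₂_X, sub_self, mul_zero, ne_eq,
      OfNat.ofNat_ne_zero, not_false_eq_true, zero_pow, add_zero]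
    linear_combination (Polynomial.X * Polynomial.C (X c) *
      (Polynomial.C (X i) - Polynomial.C (X c)) : Polynomial (MvPolynomial σ K)) * h2

theorem mem_diagonalIdeal_pow_of_monomial_mul_expand_mem [NeZero (2 : K)] {d : ℕ}
    {α : σ →₀ ℕ} {g : MvPolynomial σ K}
    (h : monomial α 1 * expand 2 g ∈ diagonalIdeal c ^ d) : g ∈ diagonalIdeal c ^ d := by
  have hline := X_pow_dvd_restrictLine c (2⁻¹ : K) h
  rw [map_mul] at hline
  have hunit : (restrictLine c (2⁻¹ : K) (monomial α 1)).coeff 0 ≠ 0 := by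
    rw [coeff_zero_restrictLine_monomial]
    exact pow_ne_zero _ (X_ne_zero c)
  have hsq := Polynomial.X_pow_dvd_of_X_pow_dvd_mul hunit hline
  rw [restrictLine_expand] at hsq
  have hinj : Function.Injective fun r => (squareLineCoeffs (K := K) c r).coeff 0 := by
    simpa only [coeff_zero_squareLineCoeffs] using scaleByVar_injective c
  exact (mem_diagonalIdeal_pow_iff c).mpr (Polynomial.X_pow_dvd_of_X_pow_dvd_eval₂ _ hinj hsq)

end Squares

section SignFlip

variable {σ K : Type*} [Field K]

noncomputable def signFlip (s : σ → K) : MvPolynomial σ K →ₐ[K] MvPolynomial σ K :=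
  aeval fun i => C (s i) * X i

variable [Fintype σ]

lemma signFlip_monomial (s : σ → K) (α : σ →₀ ℕ) (a : K) :
    signFlip s (monomial α a) = monomial α ((∏ i, s i ^ α i) * a) := by
  rw [signFlip, aeval_monomial, Finsupp.prod_fintype _ _ (by simp)]
  simp only [mul_pow, Finset.prod_mul_distrib, ← map_pow, ← map_prod, algebraMap_eq]
  rw [monomial_eq, Finsupp.prod_fintype _ _ (by simp), C_mul]
  ring

lemma coeff_signFlip (s : σ → K) (α : σ →₀ ℕ) (f : MvPolynomial σ K) :
    coeff α (signFlip s f) = (∏ i, s i ^ α i) * coeff α f := by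
  classical
  induction f using MvPolynomial.induction_on' with
  | monomial β a =>
    rw [signFlip_monomial, coeff_monomial, coeff_monomial]
    split_ifs with h <;> simp [h]
  | add p q hp hq => rw [map_add, coeff_add, coeff_add, hp, hq, mul_add]

end SignFlip

section Parity

variable {σ : Type*} [DecidableEq σ]

/-- The `(ℤ/2)^σ`-grading by the parities of the exponents; its homogeneous components are the
isotypic components for the sign changes `signFlip`. -/
def parityWeight : σ → σ → ZMod 2 := fun i => Pi.single i 1

lemma weight_parityWeight_apply (α : σ →₀ ℕ) (i : σ) :
    Finsupp.weight parityWeight α i = α i := by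
  simp only [Finsupp.weight_apply, Finsupp.sum, parityWeight, nsmul_eq_mul, Finset.sum_apply,
    Pi.mul_apply, Pi.natCast_apply, Pi.single_apply, mul_ite, mul_one, mul_zero, Finset.sum_ite_eq,
    Finsupp.mem_support_iff, ne_eq, ite_not, ite_eq_right_iff]
  exact fun h => by simp [h]

variable [Fintype σ]

lemma IsWeightedHomogeneous.exists_eq_monomial_mul_expand {R : Type*} [CommSemiring R]
    {T : σ → ZMod 2} {f : MvPolynomial σ R} (hf : f.IsWeightedHomogeneous parityWeight T) :
    ∃ g, f = monomial (Finsupp.equivFunOnFinite.symm fun i => (T i).val) 1 * expand 2 g := by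
  induction hf using IsWeightedHomogeneous.induction_on with
  | zero => exact ⟨0, by simp⟩
  | add p q _ _ hp hq =>
    obtain ⟨g, rfl⟩ := hp
    obtain ⟨g', rfl⟩ := hq
    exact ⟨g + g', by rw [map_add, mul_add]⟩
  | monomial α r hα =>
    refine ⟨monomial (Finsupp.equivFunOnFinite.symm fun i => α i / 2) r, ?_⟩
    have hα' : Finsupp.equivFunOnFinite.symm (fun i => (T i).val) +
        2 • Finsupp.equivFunOnFinite.symm (fun i => α i / 2) = α := by
      ext i
      have hi := congrFun hα i
      rw [weight_parityWeight_apply] at hi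
      simp only [Finsupp.coe_add, Finsupp.coe_equivFunOnFinite_symm, Finsupp.coe_smul,
        nsmul_eq_mul, Nat.cast_ofNat, Pi.add_apply, Pi.mul_apply, Pi.ofNat_apply, ← hi,
        ZMod.val_natCast]
      omega
    rw [expand_monomial, monomial_mul, one_mul, hα']

variable {K : Type*} [Field K] [DecidableEq K]

variable (σ K) in
def signVectors : Finset (σ → K) := Fintype.piFinset fun _ => {1, -1}

lemma sum_signVectors_prod_pow [NeZero (2 : K)] (T : σ → ZMod 2) (α : σ →₀ ℕ) :
    ∑ s ∈ signVectors σ K, (∏ i, s i ^ (T i).val) * ∏ i, s i ^ α i =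
      if Finsupp.weight parityWeight α = T then 2 ^ Fintype.card σ else 0 := by
  simp_rw [← Finset.prod_mul_distrib, ← pow_add]
  rw [signVectors, Finset.sum_prod_piFinset _ fun i x => x ^ ((T i).val + α i)]
  have h1 : (1 : K) ≠ -1 := fun h => two_ne_zero (α := K) (by linear_combination h)
  simp_rw [Finset.sum_pair h1, one_pow, one_add_neg_one_pow, ZMod.even_val_add_iff,
    Finset.prod_ite_zero, Finset.prod_const, Finset.card_univ, _root_.funext_iff,
    weight_parityWeight_apply, Finset.mem_univ, forall_const]

lemma sum_smul_signFlip [NeZero (2 : K)] (T : σ → ZMod 2) (f : MvPolynomial σ K) :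
    ∑ s ∈ signVectors σ K, (∏ i, s i ^ (T i).val) • signFlip s f =
      (2 ^ Fintype.card σ : K) • weightedHomogeneousComponent parityWeight T f := by
  ext α
  simp only [coeff_sum, coeff_smul, coeff_signFlip, coeff_weightedHomogeneousComponent,
    smul_eq_mul]
  simp_rw [← mul_assoc, ← Finset.sum_mul, sum_signVectors_prod_pow]
  split_ifs <;> simp

lemma weightedHomogeneousComponent_mem_of_signFlip_mem [NeZero (2 : K)]
    {V : Submodule K (MvPolynomial σ K)} {f : MvPolynomial σ K}
    (h : ∀ s ∈ signVectors σ K, signFlip s f ∈ V) (T : σ → ZMod 2) :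
    weightedHomogeneousComponent parityWeight T f ∈ V := by
  rw [← V.smul_mem_iff (pow_ne_zero (Fintype.card σ) (two_ne_zero : (2 : K) ≠ 0)),
    ← sum_smul_signFlip]
  exact sum_mem fun s hs => V.smul_mem _ (h s hs)

theorem mem_span_sq_sub_sq_pow_of_signFlip_mem [NeZero (2 : K)] (c : σ) {d : ℕ}
    {f : MvPolynomial σ K} (h : ∀ s ∈ signVectors σ K, signFlip s f ∈ diagonalIdeal c ^ d) :
    f ∈ Ideal.span (Set.range fun i => X i ^ 2 - X c ^ 2) ^ d := by
  rw [← sum_weightedHomogeneousComponent parityWeight f, finsum_eq_sum_of_fintype]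
  refine sum_mem fun T _ => ?_
  obtain ⟨g, hg⟩ :=
    (weightedHomogeneousComponent_isWeightedHomogeneous T f).exists_eq_monomial_mul_expand
  have hT := weightedHomogeneousComponent_mem_of_signFlip_mem
    (V := (diagonalIdeal c ^ d).restrictScalars K) h T
  rw [Submodule.restrictScalars_mem, hg] at hT
  rw [hg, ← map_expand_diagonalIdeal, ← Ideal.map_pow]
  exact Ideal.mul_mem_left _ _
    (Ideal.mem_map_of_mem _ (mem_diagonalIdeal_pow_of_monomial_mul_expand_mem c hT))

end Parity

end MvPolynomial

lemma signFlip_mem_diagonalIdeal_pow_of_mem_fatIdeal {n d : ℕ}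
    {f : MvPolynomial (Fin (n + 1)) ℂ} (hf : f ∈ fatIdeal n d) {s : Fin (n + 1) → ℂ}
    (hs : s ∈ signVectors (Fin (n + 1)) ℂ) : signFlip s f ∈ diagonalIdeal (Fin.last n) ^ d := by
  simp only [signVectors, Fintype.mem_piFinset, Finset.mem_insert, Finset.mem_singleton] at hs
  set ε : Fin n → ℂ := fun j => s 0 * s j.succ
  have hε : ∀ j, ε j = 1 ∨ ε j = -1 := fun j => by
    rcases hs 0 with h | h <;> rcases hs j.succ with h' | h' <;> simp [ε, h, h']
  have hle : (pIdeal n ε).map (signFlip s) ≤ diagonalIdeal (Fin.last n) := by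
    rw [pIdeal, Ideal.map_span, Ideal.span_le]
    rintro _ ⟨_, ⟨j, rfl⟩, rfl⟩
    have hs0 : (C (s 0) : MvPolynomial (Fin (n + 1)) ℂ) ^ 2 = 1 := by
      rcases hs 0 with h | h <;> simp [h]
    have : signFlip s (X j.succ - C (ε j) * X 0) = C (s j.succ) * (X j.succ - X 0) := by
      simp only [signFlip, map_sub, map_mul, aeval_X, aeval_C, algebraMap_eq, ε]
      linear_combination (-(C (s j.succ) * X 0) : MvPolynomial (Fin (n + 1)) ℂ) * hs0
    rw [SetLike.mem_coe, this]
    exact Ideal.mul_mem_left _ _ (X_sub_X_mem_diagonalIdeal _ _ _)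
  have hfε : f ∈ pIdeal n ε ^ d := (Submodule.mem_iInf _).mp hf ⟨ε, hε⟩
  exact Ideal.le_comap_pow _ d (Ideal.pow_right_mono (Ideal.map_le_iff_le_comap.mp hle) d hfε)

lemma sq_sub_sq_mem_pIdeal {n : ℕ} {ε : Fin n → ℂ} (hε : ∀ j, ε j = 1 ∨ ε j = -1)
    (i : Fin (n + 1)) : X i ^ 2 - X 0 ^ 2 ∈ pIdeal n ε := by
  cases i using Fin.cases with
  | zero => simp
  | succ j =>
    have hgen : X j.succ - C (ε j) * X 0 ∈ pIdeal n ε := Ideal.subset_span ⟨j, rfl⟩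
    have hsq : (C (ε j) * C (ε j) : MvPolynomial (Fin (n + 1)) ℂ) = 1 := by
      rw [← C_mul]
      rcases hε j with h | h <;> simp [h]
    have : (X j.succ ^ 2 - X 0 ^ 2 : MvPolynomial (Fin (n + 1)) ℂ) =
        (X j.succ + C (ε j) * X 0) * (X j.succ - C (ε j) * X 0) := by
      linear_combination (X 0 ^ 2 : MvPolynomial (Fin (n + 1)) ℂ) * hsq
    rw [this]
    exact Ideal.mul_mem_left _ _ hgen

theorem fatIdeal_eq_span_sq_sub_sq_pow (n d : ℕ) :
    fatIdeal n d = Ideal.span (Set.range fun i => X i ^ 2 - X (Fin.last n) ^ 2) ^ d := by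
  refine le_antisymm (fun f hf => mem_span_sq_sub_sq_pow_of_signFlip_mem (Fin.last n)
    fun s hs => signFlip_mem_diagonalIdeal_pow_of_mem_fatIdeal hf hs) ?_
  refine le_iInf fun ε => Ideal.pow_right_mono ?_ d
  rw [Ideal.span_le]
  rintro _ ⟨i, rfl⟩
  simpa using sub_mem (sq_sub_sq_mem_pIdeal ε.2 i) (sq_sub_sq_mem_pIdeal ε.2 (Fin.last n))

theorem stmt15_general (n d : ℕ) :
    fatIdeal n d
      = (Ideal.span { p : MvPolynomial (Fin (n+1)) ℂ |
          ∃ i : Fin n, p = X (Fin.castSucc i) ^ 2 - X (Fin.last n) ^ 2 }) ^ d ∧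
    fatIdeal n d
      = Ideal.span { p : MvPolynomial (Fin (n+1)) ℂ |
          ∃ a : Fin n → ℕ, (∑ i, a i) = d ∧
            p = ∏ i : Fin n,
              (X (Fin.castSucc i) ^ 2 - X (Fin.last n) ^ 2) ^ a i } := by
  have hgens : { p : MvPolynomial (Fin (n+1)) ℂ |
      ∃ i : Fin n, p = X (Fin.castSucc i) ^ 2 - X (Fin.last n) ^ 2 } =
      Set.range fun i : Fin n => X (Fin.castSucc i) ^ 2 - X (Fin.last n) ^ 2 := by
    simp only [Set.range, eq_comm]
  have h := fatIdeal_eq_span_sq_sub_sq_pow n d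
  rw [Ideal.span_range_fin_succ_of_last_eq_zero _ (sub_self _)] at h
  rw [hgens, ← Ideal.span_range_pow]
  exact ⟨h, h⟩

theorem stmt15 (n d : ℕ) (hn : 1 ≤ n) (hd : 1 ≤ d) :
    fatIdeal n d
      = (Ideal.span { p : MvPolynomial (Fin (n+1)) ℂ |
          ∃ i : Fin n, p = X (Fin.castSucc i) ^ 2 - X (Fin.last n) ^ 2 }) ^ d ∧
    fatIdeal n d
      = Ideal.span { p : MvPolynomial (Fin (n+1)) ℂ |
          ∃ a : Fin n → ℕ, (∑ i, a i) = d ∧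
            p = ∏ i : Fin n,
              (X (Fin.castSucc i) ^ 2 - X (Fin.last n) ^ 2) ^ a i } :=
  stmt15_general n d
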